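/- For |q|<1, |y|<1, |z|<1: ∑_{k=0}^∞ q^{k²} (yz)^k / ((y;q)_{k+1} (z;q)_{k+1}) = ∑_{k=0}^∞ z^k / (y;q)_{k+1}, and moreover ∑_{k=0}^∞ (-1)^k q^{k(k-1)/2} (yz)^k / (z;q)_{k+1} = ∑_{k=0}^∞ (y;q)_k z^k. -/

import Mathlib

noncomputable def qPoch (a q : ℂ) (n : ℕ) : ℂ := ∏ i ∈ Finset.range n, (1 - a * q ^ i)

noncomputable def qPochInf (a q : ℂ) : ℂ := ∏' i : ℕ, (1 - a * q ^ i)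

noncomputable def qBinom (q : ℂ) (m k : ℕ) : ℂ :=
  if k ≤ m then qPoch q q m / (qPoch q q k * qPoch q q (m - k)) else 0

/-!
Both sides of each identity, as functions of `z`, satisfy the same `q`-difference equation
`(1 - z) F(z) = 1 + g(z) F(zq)`, with `g(z) = y` for the first identity and `g(z) = -yz` for the
second; each equation comes from telescoping the series. The difference `D` of the two sides then
satisfies `(z;q)_n D(z) = (∏_{i<n} g(zq^i)) D(zq^n)`. As `|(z;q)_n|` is bounded below, while `D`
is bounded and `|g| ≤ |y| < 1` on `|w| ≤ |z|`, letting `n → ∞` gives `D(z) = 0`.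
-/

open Filter Topology

section NormedDivisionRing

variable {𝕜 : Type*} [NormedDivisionRing 𝕜]

lemma norm_mul_le_of_norm_le_one {a b : 𝕜} (hb : ‖b‖ ≤ 1) : ‖a * b‖ ≤ ‖a‖ := by
  rw [norm_mul]; exact mul_le_of_le_one_right (norm_nonneg a) hb

lemma norm_pow_le_one {q : 𝕜} (hq : ‖q‖ ≤ 1) (m : ℕ) : ‖q ^ m‖ ≤ 1 := by
  rw [norm_pow]; exact pow_le_one₀ (norm_nonneg q) hq

lemma one_sub_mul_pow_ne_zero {a q : 𝕜} (ha : ‖a‖ < 1) (hq : ‖q‖ ≤ 1) (k : ℕ) :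
    1 - a * q ^ k ≠ 0 := by
  rw [sub_ne_zero]
  refine fun h => (lt_irrefl (1 : ℝ)) ?_
  calc (1 : ℝ) = ‖a * q ^ k‖ := by rw [← h, norm_one]
    _ ≤ ‖a‖ := norm_mul_le_of_norm_le_one (norm_pow_le_one hq k)
    _ < 1 := ha

lemma norm_mul_mul_pow_le {c y w : 𝕜} {r : ℝ} (hc : ‖c‖ ≤ 1) (hy : ‖y‖ ≤ 1) (hw : ‖w‖ ≤ r)
    (k : ℕ) : ‖c * (y * w) ^ k‖ ≤ r ^ k := by
  have hr0 : 0 ≤ r := (norm_nonneg w).trans hw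
  rw [norm_mul, norm_pow, norm_mul]
  calc ‖c‖ * (‖y‖ * ‖w‖) ^ k ≤ 1 * (1 * r) ^ k := by gcongr
    _ = r ^ k := by ring

lemma norm_neg_one_pow_mul_pow_le {q : 𝕜} (hq : ‖q‖ ≤ 1) (k m : ℕ) :
    ‖(-1 : 𝕜) ^ k * q ^ m‖ ≤ 1 := by
  rw [norm_mul, norm_pow, norm_neg, norm_one, one_pow, one_mul]
  exact norm_pow_le_one hq m

lemma norm_div_le_inv_mul {x d : 𝕜} {b c : ℝ} (hx : ‖x‖ ≤ b) (hc : 0 < c) (hd : c ≤ ‖d‖) :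
    ‖x / d‖ ≤ c⁻¹ * b := by
  rw [norm_div, div_eq_inv_mul]
  exact mul_le_mul (inv_anti₀ hc hd) hx (norm_nonneg x) (inv_nonneg.2 hc.le)

lemma mul_le_norm_mul {a b : 𝕜} {c d : ℝ} (hca : c ≤ ‖a‖) (hdb : d ≤ ‖b‖) (hd : 0 ≤ d) :
    c * d ≤ ‖a * b‖ :=
  (norm_mul a b).symm ▸ mul_le_mul hca hdb hd (norm_nonneg a)

end NormedDivisionRing

lemma sum_geometric_range_le {t : ℝ} (ht0 : 0 ≤ t) (ht : t < 1) (n : ℕ) :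
    ∑ i ∈ Finset.range n, t ^ i ≤ 1 / (1 - t) := by
  simpa using geom_sum_Ico_le_of_lt_one (m := 0) (n := n) ht0 ht

lemma exp_neg_div_le_one_sub {x r : ℝ} (hx : 0 ≤ x) (hxr : x ≤ r) (hr : r < 1) :
    Real.exp (-(x / (1 - r))) ≤ 1 - x := by
  have h1x : 0 < 1 - x := by linarith
  calc Real.exp (-(x / (1 - r))) ≤ Real.exp (-(x / (1 - x))) := by
        gcongr
    _ = (Real.exp (x / (1 - x)))⁻¹ := Real.exp_neg _
    _ ≤ (x / (1 - x) + 1)⁻¹ := by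
        gcongr
        exact Real.add_one_le_exp _
    _ = 1 - x := by field_simp; ring

section Geometric

variable {E : Type*} [NormedAddCommGroup E] {f : ℕ → E} {C r : ℝ}

lemma summable_of_norm_le_geometric [CompleteSpace E] (hr0 : 0 ≤ r) (hr : r < 1)
    (h : ∀ k, ‖f k‖ ≤ C * r ^ k) : Summable f :=
  .of_norm_bounded ((summable_geometric_of_lt_one hr0 hr).mul_left C) h

lemma norm_tsum_le_of_norm_le_geometric (hr0 : 0 ≤ r) (hr : r < 1)
    (h : ∀ k, ‖f k‖ ≤ C * r ^ k) : ‖∑' k, f k‖ ≤ C * (1 - r)⁻¹ :=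
  tsum_of_norm_bounded ((hasSum_geometric_of_lt_one hr0 hr).mul_left C) h

end Geometric

lemma tsum_sub_succ {E : Type*} [AddCommGroup E] [TopologicalSpace E] [IsTopologicalAddGroup E]
    [T2Space E] {e : ℕ → E} (he : Summable e) : ∑' k, (e k - e (k + 1)) = e 0 := by
  rw [he.tsum_sub ((summable_nat_add_iff 1).2 he), he.tsum_eq_zero_add, add_sub_cancel_right]

lemma mul_tsum_eq_one_add_mul_tsum {R : Type*} [Ring R] [TopologicalSpace R] [IsTopologicalRing R]
    [T2Space R] {a b e : ℕ → R} {c g : R} (ha : Summable a) (hb : Summable b) (he : Summable e)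
    (h : ∀ k, c * a k - g * b k = e k - e (k + 1)) (he0 : e 0 = 1) :
    c * ∑' k, a k = 1 + g * ∑' k, b k := by
  rw [← ha.tsum_mul_left, ← hb.tsum_mul_left, ← sub_eq_iff_eq_add,
    ← (ha.mul_left c).tsum_sub (hb.mul_left g), ← he0, ← tsum_sub_succ he]
  exact tsum_congr h

lemma qPoch_succ (a q : ℂ) (n : ℕ) : qPoch a q (n + 1) = qPoch a q n * (1 - a * q ^ n) :=
  Finset.prod_range_succ _ _

lemma qPoch_succ' (a q : ℂ) (n : ℕ) : qPoch a q (n + 1) = (1 - a) * qPoch (a * q) q n := by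
  simp only [qPoch, Finset.prod_range_succ', pow_succ', ← mul_assoc, pow_zero, mul_one, mul_comm]

lemma qPoch_ne_zero {a q : ℂ} (ha : ‖a‖ < 1) (hq : ‖q‖ ≤ 1) (n : ℕ) : qPoch a q n ≠ 0 :=
  Finset.prod_ne_zero_iff.2 fun i _ => one_sub_mul_pow_ne_zero ha hq i

lemma norm_qPoch_le {a q : ℂ} (hq : ‖q‖ < 1) (k : ℕ) :
    ‖qPoch a q k‖ ≤ Real.exp (‖a‖ / (1 - ‖q‖)) := by
  have hgeom := sum_geometric_range_le (norm_nonneg q) hq k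
  calc ‖qPoch a q k‖ = ∏ i ∈ Finset.range k, ‖1 - a * q ^ i‖ := norm_prod _ _
    _ ≤ ∏ i ∈ Finset.range k, Real.exp (‖a‖ * ‖q‖ ^ i) := by
        refine Finset.prod_le_prod (fun i _ => norm_nonneg _) fun i _ => ?_
        calc ‖1 - a * q ^ i‖ ≤ ‖(1 : ℂ)‖ + ‖a * q ^ i‖ := norm_sub_le _ _
          _ = ‖a‖ * ‖q‖ ^ i + 1 := by rw [norm_mul, norm_pow, norm_one, add_comm]
          _ ≤ _ := Real.add_one_le_exp _
    _ = Real.exp (‖a‖ * ∑ i ∈ Finset.range k, ‖q‖ ^ i) := by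
        rw [Finset.mul_sum, Real.exp_sum]
    _ ≤ Real.exp (‖a‖ / (1 - ‖q‖)) := by
        gcongr
        rw [div_eq_mul_one_div]
        exact mul_le_mul_of_nonneg_left hgeom (norm_nonneg a)

lemma exists_pos_le_norm_qPoch {q : ℂ} {r : ℝ} (hq : ‖q‖ < 1) (hr : r < 1) :
    ∃ c > 0, ∀ a : ℂ, ‖a‖ ≤ r → ∀ k, c ≤ ‖qPoch a q k‖ := by
  refine ⟨Real.exp (-(r / ((1 - r) * (1 - ‖q‖)))), Real.exp_pos _, fun a ha k => ?_⟩
  have hr0 : 0 ≤ r := (norm_nonneg a).trans ha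
  have hterm (i : ℕ) : r * ‖q‖ ^ i ≤ r :=
    mul_le_of_le_one_right hr0 (pow_le_one₀ (norm_nonneg q) hq.le)
  have hgeom := sum_geometric_range_le (norm_nonneg q) hq k
  calc Real.exp (-(r / ((1 - r) * (1 - ‖q‖))))
      ≤ Real.exp (-(r / (1 - r) * ∑ i ∈ Finset.range k, ‖q‖ ^ i)) := by
        have h1r : 0 < 1 - r := by linarith
        gcongr
        calc r / (1 - r) * ∑ i ∈ Finset.range k, ‖q‖ ^ i ≤ r / (1 - r) * (1 / (1 - ‖q‖)) := by
              gcongr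
          _ = r / ((1 - r) * (1 - ‖q‖)) := by field_simp
    _ = ∏ i ∈ Finset.range k, Real.exp (-(r * ‖q‖ ^ i / (1 - r))) := by
        rw [← Real.exp_sum, Finset.mul_sum, ← Finset.sum_neg_distrib]
        congr 1
        exact Finset.sum_congr rfl fun i _ => by ring
    _ ≤ ∏ i ∈ Finset.range k, ‖1 - a * q ^ i‖ := by
        refine Finset.prod_le_prod (fun i _ => (Real.exp_pos _).le) fun i _ => ?_
        refine (exp_neg_div_le_one_sub (by positivity) (hterm i) hr).trans ?_
        calc 1 - r * ‖q‖ ^ i ≤ ‖(1 : ℂ)‖ - ‖a * q ^ i‖ := by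
              rw [norm_one, norm_mul, norm_pow]; gcongr
          _ ≤ ‖1 - a * q ^ i‖ := norm_sub_norm_le _ _
    _ = ‖qPoch a q k‖ := (norm_prod _ _).symm

lemma qPoch_mul_eq_prod_mul {z q : ℂ} {d g : ℕ → ℂ}
    (h : ∀ n, (1 - z * q ^ n) * d n = g n * d (n + 1)) (n : ℕ) :
    qPoch z q n * d 0 = (∏ i ∈ Finset.range n, g i) * d n := by
  induction n with
  | zero => simp [qPoch]
  | succ n ih =>
    rw [qPoch_succ, Finset.prod_range_succ, mul_right_comm, ih, mul_assoc, mul_comm (d n), h n,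
      mul_assoc]

lemma eq_zero_of_one_sub_mul_eq {z q : ℂ} {d g : ℕ → ℂ} {ρ M : ℝ} (hq : ‖q‖ < 1) (hz : ‖z‖ < 1)
    (hρ : ρ < 1) (hg : ∀ n, ‖g n‖ ≤ ρ) (hd : ∀ n, ‖d n‖ ≤ M)
    (h : ∀ n, (1 - z * q ^ n) * d n = g n * d (n + 1)) : d 0 = 0 := by
  obtain ⟨c, hc0, hc⟩ := exists_pos_le_norm_qPoch hq hz
  have hρ0 : 0 ≤ ρ := (norm_nonneg _).trans (hg 0)
  have hbound (n : ℕ) : c * ‖d 0‖ ≤ ρ ^ n * M := by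
    calc c * ‖d 0‖ ≤ ‖qPoch z q n * d 0‖ := by
          rw [norm_mul]; gcongr; exact hc z le_rfl n
      _ = ‖∏ i ∈ Finset.range n, g i‖ * ‖d n‖ := by rw [qPoch_mul_eq_prod_mul h, norm_mul]
      _ ≤ ρ ^ n * M := by
          refine mul_le_mul ?_ (hd n) (norm_nonneg _) (pow_nonneg hρ0 n)
          calc ‖∏ i ∈ Finset.range n, g i‖ = ∏ i ∈ Finset.range n, ‖g i‖ := norm_prod _ _
            _ ≤ ∏ _i ∈ Finset.range n, ρ :=
                Finset.prod_le_prod (fun i _ => norm_nonneg _) fun i _ => hg i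
            _ = ρ ^ n := by rw [Finset.prod_const, Finset.card_range]
  have hlim : Tendsto (fun n => ρ ^ n * M) atTop (𝓝 0) := by
    simpa using (tendsto_pow_atTop_nhds_zero_of_lt_one hρ0 hρ).mul_const M
  have : c * ‖d 0‖ ≤ 0 := ge_of_tendsto' hlim hbound
  exact norm_eq_zero.1 (le_antisymm (nonpos_of_mul_nonpos_right this hc0) (norm_nonneg _))

lemma tsum_eq_tsum_of_functional_eq {q z : ℂ} {u v : ℂ → ℕ → ℂ} {g : ℂ → ℂ} {ρ : ℝ}
    (hq : ‖q‖ < 1) (hz : ‖z‖ < 1) (hρ : ρ < 1) (hg : ∀ w, ‖w‖ ≤ ‖z‖ → ‖g w‖ ≤ ρ)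
    (hu : ∃ C, ∀ w, ‖w‖ ≤ ‖z‖ → ∀ k, ‖u w k‖ ≤ C * ‖z‖ ^ k)
    (hv : ∃ C, ∀ w, ‖w‖ ≤ ‖z‖ → ∀ k, ‖v w k‖ ≤ C * ‖z‖ ^ k)
    (hu_eq : ∀ w, ‖w‖ ≤ ‖z‖ → (1 - w) * ∑' k, u w k = 1 + g w * ∑' k, u (w * q) k)
    (hv_eq : ∀ w, ‖w‖ ≤ ‖z‖ → (1 - w) * ∑' k, v w k = 1 + g w * ∑' k, v (w * q) k) :
    ∑' k, u z k = ∑' k, v z k := by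
  obtain ⟨Cu, hCu⟩ := hu
  obtain ⟨Cv, hCv⟩ := hv
  have hzq (n : ℕ) : ‖z * q ^ n‖ ≤ ‖z‖ := norm_mul_le_of_norm_le_one (norm_pow_le_one hq.le n)
  set d : ℕ → ℂ := fun n => ∑' k, u (z * q ^ n) k - ∑' k, v (z * q ^ n) k
  suffices d 0 = 0 by simpa [d, sub_eq_zero] using this
  refine eq_zero_of_one_sub_mul_eq (g := fun n => g (z * q ^ n))
    (M := Cu * (1 - ‖z‖)⁻¹ + Cv * (1 - ‖z‖)⁻¹) hq hz hρ (fun n => hg _ (hzq n))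
    (fun n => ?_) (fun n => ?_)
  · exact (norm_sub_le _ _).trans <| add_le_add
      (norm_tsum_le_of_norm_le_geometric (norm_nonneg z) hz (hCu _ (hzq n)))
      (norm_tsum_le_of_norm_le_geometric (norm_nonneg z) hz (hCv _ (hzq n)))
  · simp only [d, pow_succ, ← mul_assoc]
    linear_combination (hu_eq _ (hzq n)) - (hv_eq _ (hzq n))

/-- The `k`-th summand of the generalized mock theta function `ω_q(y, w)`. -/
noncomputable def omegaTerm (q y w : ℂ) (k : ℕ) : ℂ :=
  q ^ (k ^ 2) * (y * w) ^ k / (qPoch y q (k + 1) * qPoch w q (k + 1))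

section

variable {q y : ℂ}

lemma exists_norm_omegaTerm_le (hq : ‖q‖ < 1) (hy : ‖y‖ < 1) {r : ℝ} (hr : r < 1) :
    ∃ C, ∀ w, ‖w‖ ≤ r → ∀ k, ‖omegaTerm q y w k‖ ≤ C * r ^ k := by
  obtain ⟨cy, hcy0, hcy⟩ := exists_pos_le_norm_qPoch hq hy
  obtain ⟨cr, hcr0, hcr⟩ := exists_pos_le_norm_qPoch hq hr
  refine ⟨(cy * cr)⁻¹, fun w hw k => norm_div_le_inv_mul ?_ (by positivity)
    (mul_le_norm_mul (hcy y le_rfl _) (hcr w hw _) hcr0.le)⟩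
  exact norm_mul_mul_pow_le (norm_pow_le_one hq.le _) hy.le hw k

lemma tsum_omegaTerm_functional_eq (hq : ‖q‖ < 1) (hy : ‖y‖ < 1) {w : ℂ} (hw : ‖w‖ < 1) :
    (1 - w) * ∑' k, omegaTerm q y w k = 1 + y * ∑' k, omegaTerm q y (w * q) k := by
  have hwq : ‖w * q‖ ≤ ‖w‖ := norm_mul_le_of_norm_le_one hq.le
  obtain ⟨C, hC⟩ := exists_norm_omegaTerm_le hq hy hw
  obtain ⟨cy, hcy0, hcy⟩ := exists_pos_le_norm_qPoch hq hy
  obtain ⟨cw, hcw0, hcw⟩ := exists_pos_le_norm_qPoch hq hw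
  refine mul_tsum_eq_one_add_mul_tsum (e := fun k => q ^ (k ^ 2) * (y * w) ^ k /
      (qPoch y q k * qPoch (w * q) q k))
    (summable_of_norm_le_geometric (norm_nonneg w) hw (hC w le_rfl))
    (summable_of_norm_le_geometric (norm_nonneg w) hw (hC _ hwq))
    (summable_of_norm_le_geometric (C := (cy * cw)⁻¹) (norm_nonneg w) hw fun k => ?_)
    (fun k => ?_) (by simp [qPoch])
  · exact norm_div_le_inv_mul
      (norm_mul_mul_pow_le (norm_pow_le_one hq.le _) hy.le le_rfl k)
      (by positivity) (mul_le_norm_mul (hcy y le_rfl _) (hcw _ hwq _) hcw0.le)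
  · have := qPoch_ne_zero hy hq.le k
    have := qPoch_ne_zero (hwq.trans_lt hw) hq.le k
    have := one_sub_mul_pow_ne_zero hy hq.le k
    have := one_sub_mul_pow_ne_zero hw hq.le (k + 1)
    have : 1 - w ≠ 0 := by simpa using one_sub_mul_pow_ne_zero hw hq.le 0
    simp only [omegaTerm]
    rw [qPoch_succ y, qPoch_succ' w, qPoch_succ (w * q), mul_assoc w q, ← pow_succ',
      show (k + 1) ^ 2 = k ^ 2 + 2 * k + 1 by ring]
    field_simp
    ring

lemma exists_norm_pow_div_qPoch_le (hq : ‖q‖ < 1) (hy : ‖y‖ < 1) {r : ℝ} :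
    ∃ C, ∀ w : ℂ, ‖w‖ ≤ r → ∀ k, ‖w ^ k / qPoch y q (k + 1)‖ ≤ C * r ^ k := by
  obtain ⟨cy, hcy0, hcy⟩ := exists_pos_le_norm_qPoch hq hy
  refine ⟨cy⁻¹, fun w hw k => norm_div_le_inv_mul ?_ hcy0 (hcy y le_rfl _)⟩
  rw [norm_pow]; exact pow_le_pow_left₀ (norm_nonneg w) hw k

lemma tsum_pow_div_qPoch_functional_eq (hq : ‖q‖ < 1) (hy : ‖y‖ < 1) {w : ℂ} (hw : ‖w‖ < 1) :
    (1 - w) * ∑' k, w ^ k / qPoch y q (k + 1) = 1 + y * ∑' k, (w * q) ^ k / qPoch y q (k + 1) := by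
  have hwq : ‖w * q‖ ≤ ‖w‖ := norm_mul_le_of_norm_le_one hq.le
  obtain ⟨C, hC⟩ := exists_norm_pow_div_qPoch_le (r := ‖w‖) hq hy
  obtain ⟨cy, hcy0, hcy⟩ := exists_pos_le_norm_qPoch hq hy
  refine mul_tsum_eq_one_add_mul_tsum (e := fun k => w ^ k / qPoch y q k)
    (summable_of_norm_le_geometric (norm_nonneg w) hw (hC w le_rfl))
    (summable_of_norm_le_geometric (norm_nonneg w) hw (hC _ hwq))
    (summable_of_norm_le_geometric (C := cy⁻¹) (norm_nonneg w) hw fun k => ?_)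
    (fun k => ?_) (by simp [qPoch])
  · exact norm_div_le_inv_mul (norm_pow w k).le hcy0 (hcy y le_rfl k)
  · have := qPoch_ne_zero hy hq.le k
    have := one_sub_mul_pow_ne_zero hy hq.le k
    rw [qPoch_succ y]
    field_simp
    ring

/-- The `k`-th summand of the generalized mock theta function `v_q(y, w)`. -/
noncomputable def nuTerm (q y w : ℂ) (k : ℕ) : ℂ :=
  (-1) ^ k * q ^ (k * (k - 1) / 2) * (y * w) ^ k / qPoch w q (k + 1)

lemma exists_norm_nuTerm_le (hq : ‖q‖ < 1) (hy : ‖y‖ < 1) {r : ℝ} (hr : r < 1) :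
    ∃ C, ∀ w, ‖w‖ ≤ r → ∀ k, ‖nuTerm q y w k‖ ≤ C * r ^ k := by
  obtain ⟨cr, hcr0, hcr⟩ := exists_pos_le_norm_qPoch hq hr
  exact ⟨cr⁻¹, fun w hw k => norm_div_le_inv_mul
    (norm_mul_mul_pow_le (norm_neg_one_pow_mul_pow_le hq.le _ _) hy.le hw k) hcr0 (hcr w hw _)⟩

lemma tsum_nuTerm_functional_eq (hq : ‖q‖ < 1) (hy : ‖y‖ < 1) {w : ℂ} (hw : ‖w‖ < 1) :
    (1 - w) * ∑' k, nuTerm q y w k = 1 + -(y * w) * ∑' k, nuTerm q y (w * q) k := by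
  have hwq : ‖w * q‖ ≤ ‖w‖ := norm_mul_le_of_norm_le_one hq.le
  obtain ⟨C, hC⟩ := exists_norm_nuTerm_le hq hy hw
  obtain ⟨cw, hcw0, hcw⟩ := exists_pos_le_norm_qPoch hq hw
  refine mul_tsum_eq_one_add_mul_tsum
    (e := fun k => (-1) ^ k * q ^ (k * (k - 1) / 2) * (y * w) ^ k / qPoch (w * q) q k)
    (summable_of_norm_le_geometric (norm_nonneg w) hw (hC w le_rfl))
    (summable_of_norm_le_geometric (norm_nonneg w) hw (hC _ hwq))
    (summable_of_norm_le_geometric (C := cw⁻¹) (norm_nonneg w) hw fun k => ?_)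
    (fun k => ?_) (by simp [qPoch])
  · exact norm_div_le_inv_mul
      (norm_mul_mul_pow_le (norm_neg_one_pow_mul_pow_le hq.le _ _) hy.le le_rfl k) hcw0
      (hcw _ hwq k)
  · have := qPoch_ne_zero (hwq.trans_lt hw) hq.le k
    have := one_sub_mul_pow_ne_zero hw hq.le (k + 1)
    have : 1 - w ≠ 0 := by simpa using one_sub_mul_pow_ne_zero hw hq.le 0
    have htri : (k + 1) * (k + 1 - 1) / 2 = k * (k - 1) / 2 + k := by
      rw [← Nat.choose_two_right, ← Nat.choose_two_right, Nat.choose_succ_succ',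
        Nat.choose_one_right, add_comm]
    simp only [nuTerm]
    rw [qPoch_succ' w, qPoch_succ (w * q), mul_assoc w q, ← pow_succ', htri]
    field_simp
    ring

lemma exists_norm_qPoch_mul_pow_le (hq : ‖q‖ < 1) {r : ℝ} :
    ∃ C, ∀ w : ℂ, ‖w‖ ≤ r → ∀ k, ‖qPoch y q k * w ^ k‖ ≤ C * r ^ k := by
  refine ⟨Real.exp (‖y‖ / (1 - ‖q‖)), fun w hw k => ?_⟩
  rw [norm_mul, norm_pow]
  exact mul_le_mul (norm_qPoch_le hq k) (pow_le_pow_left₀ (norm_nonneg w) hw k)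
    (by positivity) (Real.exp_pos _).le

lemma tsum_qPoch_mul_pow_functional_eq (hq : ‖q‖ < 1) {w : ℂ} (hw : ‖w‖ < 1) :
    (1 - w) * ∑' k, qPoch y q k * w ^ k = 1 + -(y * w) * ∑' k, qPoch y q k * (w * q) ^ k := by
  have hwq : ‖w * q‖ ≤ ‖w‖ := norm_mul_le_of_norm_le_one hq.le
  obtain ⟨C, hC⟩ := exists_norm_qPoch_mul_pow_le (y := y) (r := ‖w‖) hq
  have hsum := summable_of_norm_le_geometric (norm_nonneg w) hw (hC w le_rfl)
  refine mul_tsum_eq_one_add_mul_tsum hsum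
    (summable_of_norm_le_geometric (norm_nonneg w) hw (hC _ hwq)) hsum (fun k => ?_)
    (by simp [qPoch])
  rw [qPoch_succ]
  ring

end

theorem stmt_19 (q y z : ℂ) (hq : ‖q‖ < 1) (hy : ‖y‖ < 1) (hz : ‖z‖ < 1) :
    (∑' k : ℕ, q ^ (k ^ 2) * (y * z) ^ k / (qPoch y q (k + 1) * qPoch z q (k + 1)) =
      ∑' k : ℕ, z ^ k / qPoch y q (k + 1)) ∧
    (∑' k : ℕ, (-1) ^ k * q ^ (k * (k - 1) / 2) * (y * z) ^ k / qPoch z q (k + 1) =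
      ∑' k : ℕ, qPoch y q k * z ^ k) := by
  constructor
  · exact tsum_eq_tsum_of_functional_eq (u := omegaTerm q y) hq hz hy (fun _ _ => le_rfl)
      (exists_norm_omegaTerm_le hq hy hz) (exists_norm_pow_div_qPoch_le hq hy)
      (fun w hw => tsum_omegaTerm_functional_eq hq hy (hw.trans_lt hz))
      (fun w hw => tsum_pow_div_qPoch_functional_eq hq hy (hw.trans_lt hz))
  · have hg (w : ℂ) (hw : ‖w‖ ≤ ‖z‖) : ‖-(y * w)‖ ≤ ‖y‖ :=
      (norm_neg _).trans_le (norm_mul_le_of_norm_le_one (hw.trans hz.le))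
    exact tsum_eq_tsum_of_functional_eq (u := nuTerm q y) hq hz hy hg
      (exists_norm_nuTerm_le hq hy hz) (exists_norm_qPoch_mul_pow_le hq)
      (fun w hw => tsum_nuTerm_functional_eq hq hy (hw.trans_lt hz))
      (fun w hw => tsum_qPoch_mul_pow_functional_eq hq (hw.trans_lt hz))
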